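/- Let f : ℝⁿ → ℝᵐ be twice continuously differentiable, let y ∈ ℝᵐ, let θ* ∈ ℝⁿ, and let α ≥ 0. Then the second Fréchet derivative (Hessian bilinear form) of the α-expanded objective E_α at the point θ* satisfies, for all u, v ∈ ℝⁿ: D²E_α(θ*)(u, v) = (1 + α)·D²E(θ*)(u, v) − α·⟪Df(θ*)u, Df(θ*)v⟫, where Df(θ*) is the Fréchet derivative of f at θ* and D²E(θ*) is the second Fréchet derivative of E at θ*. -/

import Mathlib

/-!
For any fixed target `c`, the Hessian of `θ ↦ ½‖c − f θ‖²` at `x` is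
`⟪Df(x) u, Df(x) v⟫ − ⟪c − f x, D²f(x)(u, v)⟫`: a Gauss–Newton term independent of `c` plus a
curvature term linear in the residual `c − f x`. At `θ*` the expanded target has residual
`ŷ − f θ* = (1 + α) • (y − f θ*)`, so only the curvature term is scaled by `1 + α`.
-/

open scoped RealInnerProductSpace

/-- The least-squares objective `E(θ) = ½‖y − f(θ)‖²`. -/
noncomputable def lsE {n m : ℕ} (f : EuclideanSpace ℝ (Fin n) → EuclideanSpace ℝ (Fin m))
    (y : EuclideanSpace ℝ (Fin m)) (θ : EuclideanSpace ℝ (Fin n)) : ℝ :=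
  (1 / 2) * ‖y - f θ‖ ^ 2

/-- The `α`-expanded objective at the point `θs`:
`E_α(θ) = ½‖ŷ − f(θ)‖²` with `ŷ = y + α • (y − f(θs))`. -/
noncomputable def lsEexp {n m : ℕ} (f : EuclideanSpace ℝ (Fin n) → EuclideanSpace ℝ (Fin m))
    (y : EuclideanSpace ℝ (Fin m)) (θs : EuclideanSpace ℝ (Fin n)) (α : ℝ)
    (θ : EuclideanSpace ℝ (Fin n)) : ℝ :=
  (1 / 2) * ‖(y + α • (y - f θs)) - f θ‖ ^ 2

section

variable {E F : Type*} [NormedAddCommGroup E] [NormedSpace ℝ E]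
  [NormedAddCommGroup F] [InnerProductSpace ℝ F] {f : E → F} {x : E}

theorem fderiv_half_norm_sq_sub (hf : DifferentiableAt ℝ f x) (c : F) :
    fderiv ℝ (fun θ => (1 / 2 : ℝ) * ‖c - f θ‖ ^ 2) x =
      -(innerSL ℝ (c - f x)).comp (fderiv ℝ f x) := by
  refine (((hasFDerivAt_const c x).sub hf.hasFDerivAt).norm_sq.const_mul (1 / 2)).fderiv.trans ?_
  ext v
  simp

theorem fderiv_fderiv_half_norm_sq_sub_apply (hf : Differentiable ℝ f)
    (hf' : DifferentiableAt ℝ (fderiv ℝ f) x) (c : F) (u v : E) :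
    fderiv ℝ (fderiv ℝ (fun θ => (1 / 2 : ℝ) * ‖c - f θ‖ ^ 2)) x u v =
      ⟪fderiv ℝ f x u, fderiv ℝ f x v⟫ - ⟪c - f x, fderiv ℝ (fderiv ℝ f) x u v⟫ := by
  have hinner : HasFDerivAt (fun θ => innerSL ℝ (c - f θ))
      ((innerSL ℝ).comp (0 - fderiv ℝ f x)) x :=
    (innerSL ℝ).hasFDerivAt.comp x ((hasFDerivAt_const c x).sub (hf x).hasFDerivAt)
  rw [funext fun θ => fderiv_half_norm_sq_sub (hf θ) c, fderiv_fun_neg,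
    fderiv_clm_comp hinner.differentiableAt hf', hinner.fderiv]
  simp [inner_sub_left]
  ring

end

theorem stmt_2_general {n m : ℕ} (f : EuclideanSpace ℝ (Fin n) → EuclideanSpace ℝ (Fin m))
    (y : EuclideanSpace ℝ (Fin m)) (θs : EuclideanSpace ℝ (Fin n))
    (hf : ContDiff ℝ 2 f) (α : ℝ) :
    ∀ u v : EuclideanSpace ℝ (Fin n),
      fderiv ℝ (fderiv ℝ (lsEexp f y θs α)) θs u v =
        (1 + α) * (fderiv ℝ (fderiv ℝ (lsE f y)) θs u v) -
          α * ⟪fderiv ℝ f θs u, fderiv ℝ f θs v⟫ := by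
  intro u v
  have hdf : Differentiable ℝ f := hf.differentiable (by norm_num)
  have hdf' : DifferentiableAt ℝ (fderiv ℝ f) θs :=
    ((hf.fderiv_right (m := 1) le_rfl).differentiable one_ne_zero) θs
  have hresidual : y + α • (y - f θs) - f θs = (1 + α) • (y - f θs) := by module
  unfold lsEexp lsE
  rw [fderiv_fderiv_half_norm_sq_sub_apply hdf hdf',
    fderiv_fderiv_half_norm_sq_sub_apply hdf hdf', hresidual, real_inner_smul_left]
  ring

theorem stmt_2 {n m : ℕ} (f : EuclideanSpace ℝ (Fin n) → EuclideanSpace ℝ (Fin m))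
    (y : EuclideanSpace ℝ (Fin m)) (θs : EuclideanSpace ℝ (Fin n))
    (hf : ContDiff ℝ 2 f) (α : ℝ) (hα : 0 ≤ α) :
    ∀ u v : EuclideanSpace ℝ (Fin n),
      fderiv ℝ (fderiv ℝ (lsEexp f y θs α)) θs u v =
        (1 + α) * (fderiv ℝ (fderiv ℝ (lsE f y)) θs u v) -
          α * ⟪fderiv ℝ f θs u, fderiv ℝ f θs v⟫ :=
  stmt_2_general f y θs hf α
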